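/- arXiv:1911.10453 — 3 statements merged into one kernel-verified Lean document; each statement's English description precedes it below -/
import Mathlib

section
/- Let (W, ω) be a 2n-dimensional complex symplectic vector space, J a diagonalizable operator with ω(Ju,v) = −ω(u,Jv), and L ⊆ W a Lagrangian subspace that is J-invariant with J acting on L with eigenvalues ν₁, ..., ν_n. Then the spectrum of J on W (with multiplicity) is {ν₁, ..., ν_n, −ν₁, ..., −ν_n}, and there exists a J-invariant Lagrangian complement V of L in W on which J has eigenvalues −ν₁, ..., −ν_n. -/
/-!
Eigenvectors of a skew endomorphism `J` with eigenvalues `μ`, `λ` are `ω`-orthogonal unless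
`μ + λ = 0`, and diagonalizability lets one replace any vector by its component in the
`(-μ)`-eigenspace without changing its pairing with the `μ`-eigenspace. Projecting an
`ω`-dual family of the eigenbasis `b` of `L` in this way gives eigenvectors `f j` with eigenvalues
`-ν j` and `ω (b i) (f j) = δᵢⱼ`; a correction by multiples of the `b k` makes them isotropic.
Pairing against `b` and `f` shows that `b` and `f` together are linearly independent, hence a
basis of `W` by counting dimensions.
-/

namespace LinearMap.BilinForm

variable {K V ι : Type*} [Field K] [AddCommGroup V] [Module K V]

theorem exists_apply_eq_ite_of_linearIndependent [FiniteDimensional K V] [DecidableEq ι]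
    {B : LinearMap.BilinForm K V} (hB : B.Nondegenerate) {b : ι → V} (hb : LinearIndependent K b) :
    ∃ u : ι → V, ∀ i j, B (b i) (u j) = if i = j then 1 else 0 := by
  choose φ hφ using fun j => LinearMap.exists_extend ((Module.Basis.span hb).coord j)
  refine ⟨fun j => (B.flip.toDual hB.flip).symm (φ j), fun i j => ?_⟩
  rw [← flip_apply B, apply_toDual_symm_apply, ← Module.Basis.coe_span_apply hb i,
    ← Submodule.subtype_apply, ← LinearMap.comp_apply, hφ, Module.Basis.coord_apply,
    Module.Basis.repr_self, Finsupp.single_apply]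

theorem linearIndependent_sumElim_of_apply_eq_ite [DecidableEq ι] {B : LinearMap.BilinForm K V}
    {b f : ι → V} (hb : ∀ i j, B (b i) (b j) = 0) (hf : ∀ i j, B (f i) (f j) = 0)
    (hbf : ∀ i j, B (b i) (f j) = if i = j then 1 else 0) :
    LinearIndependent K (Sum.elim b f) := by
  refine LinearIndependent.of_pairwise_dual_eq_zero_one _
    (Sum.elim (fun j => B.flip (f j)) (fun j => B (b j))) ?_ ?_
  · rintro (i | i) (j | j) hij <;> simp_all [eq_comm (a := j)]
  · rintro (i | i) <;> simp [hbf]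

section SkewEndomorphism

variable {ω : LinearMap.BilinForm K V} {J : Module.End K V}

theorem apply_eq_zero_of_mem_eigenspace (hskew : ∀ u v, ω (J u) v + ω u (J v) = 0)
    {μ ν : K} (hμν : μ + ν ≠ 0) {x y : V} (hx : x ∈ J.eigenspace μ) (hy : y ∈ J.eigenspace ν) :
    ω x y = 0 := by
  have h := hskew x y
  rw [Module.End.mem_eigenspace_iff.mp hx, Module.End.mem_eigenspace_iff.mp hy, map_smul,
    map_smul, smul_apply, smul_eq_mul, smul_eq_mul, ← add_mul] at h
  exact (mul_eq_zero.mp h).resolve_left hμν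

theorem exists_mem_eigenspace_neg_apply_eq (hskew : ∀ u v, ω (J u) v + ω u (J v) = 0)
    (hdiag : ⨆ μ, J.eigenspace μ = ⊤) (μ : K) (w : V) :
    ∃ y ∈ J.eigenspace (-μ), ∀ x ∈ J.eigenspace μ, ω x y = ω x w := by
  refine Submodule.iSup_induction _
    (motive := fun w => ∃ y ∈ J.eigenspace (-μ), ∀ x ∈ J.eigenspace μ, ω x y = ω x w)
    (hdiag ▸ Submodule.mem_top : w ∈ ⨆ μ, J.eigenspace μ)
    (fun ν w hw => ?_) ⟨0, zero_mem _, fun _ _ => rfl⟩ ?_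
  · by_cases hν : ν = -μ
    · exact ⟨w, hν ▸ hw, fun _ _ => rfl⟩
    · refine ⟨0, zero_mem _, fun x hx => ?_⟩
      rw [map_zero, apply_eq_zero_of_mem_eigenspace hskew (fun h => hν ?_) hx hw]
      linear_combination h
  · rintro w₁ w₂ ⟨y₁, hy₁, h₁⟩ ⟨y₂, hy₂, h₂⟩
    exact ⟨y₁ + y₂, add_mem hy₁ hy₂, fun x hx => by simp [h₁ x hx, h₂ x hx]⟩

theorem exists_mem_eigenspace_neg_apply_eq_ite [FiniteDimensional K V] [DecidableEq ι]
    (hnondeg : ω.Nondegenerate) (hskew : ∀ u v, ω (J u) v + ω u (J v) = 0)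
    (hdiag : ⨆ μ, J.eigenspace μ = ⊤) {ν : ι → K} {b : ι → V} (hind : LinearIndependent K b)
    (hb : ∀ i, b i ∈ J.eigenspace (ν i)) :
    ∃ f : ι → V, (∀ j, f j ∈ J.eigenspace (-ν j)) ∧
      ∀ i j, ω (b i) (f j) = if i = j then 1 else 0 := by
  obtain ⟨u, hu⟩ := exists_apply_eq_ite_of_linearIndependent hnondeg hind
  choose f hf hfu using fun j => exists_mem_eigenspace_neg_apply_eq hskew hdiag (ν j) (u j)
  refine ⟨f, hf, fun i j => ?_⟩
  by_cases hν : ν i = ν j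
  · rw [hfu j (b i) (hν ▸ hb i), hu]
  · rw [if_neg (fun h : i = j => hν (congrArg ν h))]
    exact apply_eq_zero_of_mem_eigenspace hskew (fun h => hν (by linear_combination h))
      (hb i) (hf j)

/-- The isotropic family is `f j - ½ ∑ₖ ω (f j) (f k) • b k`; the correction stays in the
`(-ν j)`-eigenspace because `ω (f j) (f k) = 0` unless `ν k = -ν j`. -/
theorem exists_isotropic_of_apply_eq_ite [Fintype ι] [DecidableEq ι] [NeZero (2 : K)]
    (halt : ω.IsAlt) (hskew : ∀ u v, ω (J u) v + ω u (J v) = 0) {ν : ι → K} {b f : ι → V}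
    (hb : ∀ i, b i ∈ J.eigenspace (ν i)) (hbiso : ∀ i j, ω (b i) (b j) = 0)
    (hf : ∀ j, f j ∈ J.eigenspace (-ν j)) (hbf : ∀ i j, ω (b i) (f j) = if i = j then 1 else 0) :
    ∃ f' : ι → V, (∀ j, f' j ∈ J.eigenspace (-ν j)) ∧ (∀ i j, ω (f' i) (f' j) = 0) ∧
      ∀ i j, ω (b i) (f' j) = if i = j then 1 else 0 := by
  set c : ι → V := fun j => (2 : K)⁻¹ • ∑ k, ω (f j) (f k) • b k with hc
  have hbc : ∀ i j, ω (b i) (c j) = 0 := fun i j => by simp [hc, hbiso]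
  have hfb : ∀ i j, ω (f i) (b j) = -if j = i then 1 else 0 := fun i j => by
    rw [← hbf, halt.neg_eq]
  have hcf : ∀ i j, ω (c i) (f j) = 2⁻¹ * ω (f i) (f j) := fun i j => by
    simp [hc, hbf, Finset.sum_ite_eq']
  have hfc : ∀ i j, ω (f i) (c j) = 2⁻¹ * ω (f i) (f j) := fun i j => by
    simp [hc, hfb, Finset.sum_ite_eq', ← halt.neg_eq (f j)]
  refine ⟨fun j => f j - c j, fun j => sub_mem (hf j) (Submodule.smul_mem _ _ ?_),
    fun i j => ?_, fun i j => ?_⟩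
  · refine Submodule.sum_mem _ fun k _ => ?_
    by_cases hν : ν k = -ν j
    · exact Submodule.smul_mem _ _ (hν ▸ hb k)
    · rw [apply_eq_zero_of_mem_eigenspace hskew (fun h => hν (by linear_combination -h)) (hf j)
        (hf k), zero_smul]
      exact zero_mem _
  · have hcc : ω (c i) (c j) = 0 := by simp [hc, hbiso]
    simp only [map_sub, LinearMap.sub_apply, hcf, hfc, hcc]
    field_simp
    ring
  · rw [map_sub, hbc, sub_zero, hbf]

end SkewEndomorphism

end LinearMap.BilinForm

open LinearMap.BilinForm

theorem stmt7_general {W : Type*} [AddCommGroup W] [Module ℂ W] [FiniteDimensional ℂ W]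
    {n : ℕ} (hW : Module.finrank ℂ W = 2 * n)
    (ω : LinearMap.BilinForm ℂ W)
    (halt : ∀ u : W, ω u u = 0) (hnondeg : ω.Nondegenerate)
    (J : Module.End ℂ W)
    (hskew : ∀ u v : W, ω (J u) v + ω u (J v) = 0)
    (hdiag : ⨆ μ : ℂ, J.eigenspace μ = ⊤)
    (L : Submodule ℂ W) (hLiso : ∀ u ∈ L, ∀ v ∈ L, ω u v = 0)
    (ν : Fin n → ℂ) (b : Module.Basis (Fin n) ℂ L)
    (hb : ∀ i, J (b i : W) = ν i • (b i : W)) :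
    ∃ f : Fin n → W,
      (∀ i, J (f i) = (-ν i) • f i) ∧
      (∀ i j, ω (f i) (f j) = 0) ∧
      IsCompl L (Submodule.span ℂ (Set.range f)) ∧
      ∃ B : Module.Basis (Fin n ⊕ Fin n) ℂ W,
        (∀ i, B (Sum.inl i) = (b i : W)) ∧ (∀ i, B (Sum.inr i) = f i) := by
  have hbind : LinearIndependent ℂ fun i => (b i : W) :=
    b.linearIndependent.map' L.subtype L.ker_subtype
  have hbeig : ∀ i, (b i : W) ∈ J.eigenspace (ν i) :=
    fun i => Module.End.mem_eigenspace_iff.mpr (hb i)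
  have hbiso : ∀ i j, ω (b i) (b j) = 0 := fun i j => hLiso _ (b i).2 _ (b j).2
  obtain ⟨f₀, hf₀, hbf₀⟩ := exists_mem_eigenspace_neg_apply_eq_ite hnondeg hskew hdiag hbind hbeig
  obtain ⟨f, hf, hfiso, hbf⟩ :=
    exists_isotropic_of_apply_eq_ite halt hskew hbeig hbiso hf₀ hbf₀
  let B := basisOfLinearIndependentOfCardEqFinrank' _
    (linearIndependent_sumElim_of_apply_eq_ite hbiso hfiso hbf) (by simp [hW, two_mul])
  have hcompl := B.linearIndependent.isCompl_span_image B.span_eq Set.isCompl_range_inl_range_inr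
  rw [coe_basisOfLinearIndependentOfCardEqFinrank', ← Set.range_comp, ← Set.range_comp,
    Sum.elim_comp_inl, Sum.elim_comp_inr, show (fun i => (b i : W)) = L.subtype ∘ b from rfl,
    Set.range_comp, Submodule.span_image, b.span_eq, Submodule.map_subtype_top] at hcompl
  exact ⟨f, fun i => Module.End.mem_eigenspace_iff.mp (hf i), hfiso, hcompl, B,
    fun i => by simp [B], fun i => by simp [B]⟩

/-- Let `(W, ω)` be a `2n`-dimensional complex symplectic space, `J` a diagonalizable
infinitesimal symplectomorphism, and `L ⊆ W` a `J`-invariant Lagrangian subspace on which `J` has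
an eigenbasis `b` with eigenvalues `ν₁, ..., ν_n`.  Then there is a `J`-invariant Lagrangian
complement `V` of `L` spanned by eigenvectors `f i` with eigenvalues `−ν i`; in particular the
`b i` together with the `f i` form an eigenbasis of `W`, so the spectrum of `J` on `W` (with
multiplicity) is `{ν₁, ..., ν_n, −ν₁, ..., −ν_n}`. -/
theorem stmt7 {W : Type*} [AddCommGroup W] [Module ℂ W] [FiniteDimensional ℂ W]
    {n : ℕ} (hW : Module.finrank ℂ W = 2 * n)
    (ω : LinearMap.BilinForm ℂ W)
    (halt : ∀ u : W, ω u u = 0) (hnondeg : ω.Nondegenerate)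
    (J : Module.End ℂ W)
    (hskew : ∀ u v : W, ω (J u) v + ω u (J v) = 0)
    (hdiag : ⨆ μ : ℂ, J.eigenspace μ = ⊤)
    (L : Submodule ℂ W) (hLiso : ∀ u ∈ L, ∀ v ∈ L, ω u v = 0)
    (hLdim : Module.finrank ℂ L = n)
    (ν : Fin n → ℂ) (b : Module.Basis (Fin n) ℂ L)
    (hb : ∀ i, J (b i : W) = ν i • (b i : W)) :
    ∃ f : Fin n → W,
      (∀ i, J (f i) = (-ν i) • f i) ∧
      (∀ i j, ω (f i) (f j) = 0) ∧
      IsCompl L (Submodule.span ℂ (Set.range f)) ∧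
      ∃ B : Module.Basis (Fin n ⊕ Fin n) ℂ W,
        (∀ i, B (Sum.inl i) = (b i : W)) ∧ (∀ i, B (Sum.inr i) = f i) :=
  stmt7_general hW ω halt hnondeg J hskew hdiag L hLiso ν b hb
end

section
/- In sl₂(ℂ) with standard basis H, X, Y and the representation W = F ⊕ Sym³F (F the defining 2-dimensional representation), the element Ω = (e₁, (1/2)e₁₁₂) satisfies H Ω = Ω where here one takes J = H, and the three vectors HΩ, XΩ, YΩ span a Lagrangian subspace of the 8-dimensional symplectic space W (with the standard invariant symplectic structure). -/
open Matrix

namespace Stmt11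

/- `sl₂(ℂ)` acting on `W = F ⊕ Sym³F`, realized on `ℂ⁶` with coordinates
`(e₁, e₂, e₁₁₁, e₁₁₂, e₁₂₂, e₂₂₂)`. -/

/-- The action of `H` on `F ⊕ Sym³F`. -/
def H : Matrix (Fin 6) (Fin 6) ℂ :=
  Matrix.diagonal ![1, -1, 3, 1, -1, -3]

/-- The action of `X` on `F ⊕ Sym³F` (`X e₂ = e₁`, `X v_k = k v_{k-1}`). -/
def X : Matrix (Fin 6) (Fin 6) ℂ :=
  !![0, 1, 0, 0, 0, 0;
     0, 0, 0, 0, 0, 0;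
     0, 0, 0, 1, 0, 0;
     0, 0, 0, 0, 2, 0;
     0, 0, 0, 0, 0, 3;
     0, 0, 0, 0, 0, 0]

/-- The action of `Y` on `F ⊕ Sym³F` (`Y e₁ = e₂`, `Y v_k = (3-k) v_{k+1}`). -/
def Y : Matrix (Fin 6) (Fin 6) ℂ :=
  !![0, 0, 0, 0, 0, 0;
     1, 0, 0, 0, 0, 0;
     0, 0, 0, 0, 0, 0;
     0, 0, 3, 0, 0, 0;
     0, 0, 0, 2, 0, 0;
     0, 0, 0, 0, 1, 0]

/-- The Gram matrix of the standard invariant symplectic form on `F ⊕ Sym³F`: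
`ω(e₁,e₂) = 1`, `ω(e₁₁₁, e₂₂₂) = 6`, `ω(e₁₁₂, e₁₂₂) = -2`. -/
def Om : Matrix (Fin 6) (Fin 6) ℂ :=
  !![0,  1, 0, 0,  0, 0;
     -1, 0, 0, 0,  0, 0;
     0,  0, 0, 0,  0, 6;
     0,  0, 0, 0, -2, 0;
     0,  0, 0, 2,  0, 0;
     0,  0, -6, 0, 0, 0]

/-- `Ω = (e₁, (1/2) e₁₁₂)`. -/
noncomputable def Omega : Fin 6 → ℂ := ![1, 0, 0, 1/2, 0, 0]

/-! Ω has weight 1 for `H`, `XΩ = ½ e₁₁₁` weight 3 and `YΩ = e₂ + e₁₂₂` weight −1. Since ω is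
`sl₂`-invariant it pairs only opposite weights, so the only pairing to check is
`ω(Ω, YΩ) = ω(e₁, e₂) + ½ ω(e₁₁₂, e₁₂₂) = 1 − 1 = 0`. The three vectors are independent because
their supports are disjoint. -/

lemma dotProduct_mulVec_eq_zero_of_mem_span {n R : Type*} [Fintype n] [CommSemiring R]
    (M : Matrix n n R) {s : Set (n → R)} (hs : ∀ u ∈ s, ∀ v ∈ s, u ⬝ᵥ (M *ᵥ v) = 0)
    {u v : n → R} (hu : u ∈ Submodule.span R s) (hv : v ∈ Submodule.span R s) :
    u ⬝ᵥ (M *ᵥ v) = 0 := by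
  induction hu, hv using Submodule.span_induction₂ with
  | mem_mem u v hu hv => exact hs u hu v hv
  | zero_left | zero_right => simp
  | add_left _ _ _ _ _ _ h₁ h₂ => simp [add_dotProduct, h₁, h₂]
  | add_right _ _ _ _ _ _ h₁ h₂ => simp [mulVec_add, h₁, h₂]
  | smul_left _ _ _ _ _ h => simp [h]
  | smul_right _ _ _ _ _ h => simp [mulVec_smul, h]

lemma finrank_span_triple_eq_three {K V : Type*} [DivisionRing K] [AddCommGroup V]
    [Module K V] {a b c : V} (h : LinearIndependent K ![a, b, c]) :
    Module.finrank K (Submodule.span K {a, b, c}) = 3 := by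
  rw [← Matrix.range_cons_cons_empty b c ![], ← Set.singleton_union, ← Matrix.range_cons,
    finrank_span_eq_card h, Fintype.card_fin]

lemma H_mulVec_Omega : H *ᵥ Omega = Omega := by
  ext i; fin_cases i <;> simp [H, Omega, mulVec_diagonal]

lemma X_mulVec_Omega : X *ᵥ Omega = ![0, 0, 1/2, 0, 0, 0] := by
  ext i; fin_cases i <;> simp [X, Omega, mulVec, dotProduct, Fin.sum_univ_succ]

lemma Y_mulVec_Omega : Y *ᵥ Omega = ![0, 1, 0, 0, 1, 0] := by
  ext i; fin_cases i <;> simp [Y, Omega, mulVec, dotProduct, Fin.sum_univ_succ]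

lemma Om_isotropic_on_tangent :
    ∀ u ∈ ({Omega, ![0, 0, 1/2, 0, 0, 0], ![0, 1, 0, 0, 1, 0]} : Set (Fin 6 → ℂ)),
    ∀ v ∈ ({Omega, ![0, 0, 1/2, 0, 0, 0], ![0, 1, 0, 0, 1, 0]} : Set (Fin 6 → ℂ)),
      u ⬝ᵥ (Om *ᵥ v) = 0 := by
  simp only [Set.mem_insert_iff, Set.mem_singleton_iff]
  rintro u (rfl | rfl | rfl) v (rfl | rfl | rfl) <;>
    simp [Om, Omega, mulVec, dotProduct, Fin.sum_univ_succ]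

lemma linearIndependent_tangent :
    LinearIndependent ℂ ![Omega, ![0, 0, 1/2, 0, 0, 0], ![0, 1, 0, 0, 1, 0]] := by
  rw [Fintype.linearIndependent_iff]
  intro g hg
  simp_all [funext_iff, Fin.forall_fin_succ, Fin.sum_univ_succ, Omega]

/-- In `sl₂(ℂ)` with standard basis `H, X, Y` acting on `W = F ⊕ Sym³F` (with the
standard invariant symplectic structure `ω`), the element `Ω = (e₁, (1/2) e₁₁₂)` satisfies
`H Ω = Ω` (so `J = H`), and the three vectors `HΩ, XΩ, YΩ` span a Lagrangian subspace of the
6-dimensional symplectic space `W`: an isotropic subspace of dimension `3 = (1/2) dim W`. -/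
theorem stmt11 :
    H *ᵥ Omega = Omega ∧
    (∀ u ∈ Submodule.span ℂ {H *ᵥ Omega, X *ᵥ Omega, Y *ᵥ Omega},
      ∀ v ∈ Submodule.span ℂ {H *ᵥ Omega, X *ᵥ Omega, Y *ᵥ Omega},
        u ⬝ᵥ (Om *ᵥ v) = 0) ∧
    Module.finrank ℂ
      (Submodule.span ℂ {H *ᵥ Omega, X *ᵥ Omega, Y *ᵥ Omega} : Submodule ℂ (Fin 6 → ℂ)) = 3 := by
  refine ⟨H_mulVec_Omega, ?_⟩
  rw [H_mulVec_Omega, X_mulVec_Omega, Y_mulVec_Omega]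
  exact ⟨fun u hu v hv => dotProduct_mulVec_eq_zero_of_mem_span Om Om_isotropic_on_tangent hu hv,
    finrank_span_triple_eq_three linearIndependent_tangent⟩

end Stmt11
end

section
/- Let g be simple, (g, W, Ω) a homogeneous Airy datum in the sense that W is a 2·dim(g)-dimensional symplectic g-module, {TΩ}_{T∈g} is Lagrangian, and JΩ = Ω with ad_J diagonalizable with eigenvalues λ_i summing to 0. If the submodule W' ⊆ W generated by Ω has dimension exactly dim g, then tr_{W'}(J) = dim(g) and also tr_{W'}(J) = 0 when dim g > 0 — a contradiction. Hence dim W' > dim g whenever dim g > 0. -/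
attribute [local instance 100] LieRing.ofAssociativeRing

/-! If `W'` had dimension `dim g`, the orbit map `T ↦ ρ T Ω` would be an isomorphism `g ≃ W'`
intertwining `ad J + 1` with `ρ J` on `W'`, so `tr_{W'} (ρ J) = tr (ad J) + dim g`. A semisimple
Lie algebra is perfect and traces of representations vanish on `⁅g, g⁆`, so both traces are `0`,
contradicting `dim g > 0`. -/

open Module LinearMap

/-- The complement of `⁅⊤, ⊤⁆` in the Boolean algebra of ideals is abelian, hence `⊥`. -/
lemma LieAlgebra.IsSemisimple.lowerCentralSeries_one_eq_top {R L : Type*} [CommRing R]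
    [LieRing L] [LieAlgebra R L] [LieAlgebra.IsSemisimple R L] :
    LieModule.lowerCentralSeries R L L 1 = ⊤ := by
  rw [LieModule.lowerCentralSeries_succ, LieModule.lowerCentralSeries_zero]
  set D : LieIdeal R L := ⁅(⊤ : LieIdeal R L), (⊤ : LieIdeal R L)⁆
  have hDc : IsLieAbelian (Dᶜ : LieIdeal R L) := by
    rw [LieSubmodule.lie_abelian_iff_lie_self_eq_bot, eq_bot_iff, ← inf_compl_eq_bot (a := D)]
    exact le_inf (LieSubmodule.mono_lie le_top le_top) (LieSubmodule.lie_le_left _ _)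
  have hDc_eq_bot : Dᶜ = ⊥ :=
    (LieAlgebra.hasTrivialRadical_iff_no_abelian_ideals R L).mp inferInstance _ hDc
  simpa [hDc_eq_bot] using sup_compl_eq_top (x := D)

lemma LinearMap.injective_of_finrank_range_eq {K V V₂ : Type*} [DivisionRing K]
    [AddCommGroup V] [Module K V] [AddCommGroup V₂] [Module K V₂] [FiniteDimensional K V]
    {f : V →ₗ[K] V₂} (h : finrank K (range f) = finrank K V) : Function.Injective f := by
  have := f.finrank_range_add_finrank_ker
  rw [← ker_eq_bot]
  exact Submodule.finrank_eq_zero.1 (by omega)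

namespace LieHom

variable {R L M : Type*} [CommRing R] [LieRing L] [LieAlgebra R L] [AddCommGroup M] [Module R M]
  (ρ : L →ₗ⁅R⁆ Module.End R M)

lemma trace_restrict_eq_zero_of_mem_lowerCentralSeries {p : Submodule R M}
    (hp : ∀ x, ∀ m ∈ p, ρ x m ∈ p) {x : L}
    (hx : x ∈ LieModule.lowerCentralSeries R L L 1) :
    trace R p ((ρ x).restrict (hp x)) = 0 := by
  let := LieRingModule.compLieHom M ρ
  have := LieModule.compLieHom (R := R) M ρ
  let N : LieSubmodule R L M := { p with lie_mem := hp _ _ }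
  exact LieModule.trace_toEnd_eq_zero_of_mem_lcs R L N le_rfl hx

lemma apply_apply_of_apply_eq_smul {J : L} {v : M} {c : R} (hv : ρ J v = c • v) (T : L) :
    ρ J (ρ T v) = ρ ⁅J, T⁆ v + c • ρ T v := by
  rw [LieHom.map_lie, Ring.lie_def, LinearMap.sub_apply, Module.End.mul_apply,
    Module.End.mul_apply, hv, map_smul, sub_add_cancel]

lemma trace_restrict_eq_of_orbit_equiv [Module.Free R L] [Module.Finite R L] {J : L} {v : M}
    {c : R} (hv : ρ J v = c • v) {p : Submodule R M} (hp : ∀ m ∈ p, ρ J m ∈ p)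
    (e : L ≃ₗ[R] p) (he : ∀ T, (e T : M) = ρ T v) :
    trace R p ((ρ J).restrict hp) = trace R L (LieAlgebra.ad R L J) + c * finrank R L := by
  have hconj : e.conj (LieAlgebra.ad R L J + c • 1) = (ρ J).restrict hp := by
    ext w
    obtain ⟨T, rfl⟩ := e.surjective w
    rw [LinearEquiv.conj_apply_apply, LinearEquiv.symm_apply_apply, coe_restrict_apply, he, he,
      ρ.apply_apply_of_apply_eq_smul hv]
    simp
  rw [← hconj, trace_conj', map_add, map_smul, trace_one, smul_eq_mul]

end LieHom

theorem stmt14_general {g : Type*} [LieRing g] [LieAlgebra ℂ g] [FiniteDimensional ℂ g]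
    [LieAlgebra.IsSemisimple ℂ g]
    {W : Type*} [AddCommGroup W] [Module ℂ W] [FiniteDimensional ℂ W]
    {n : ℕ} (hn : Module.finrank ℂ g = n) (hpos : 0 < n)
    (ρ : g →ₗ⁅ℂ⁆ Module.End ℂ W)
    (Ω : W)
    (hLag : Module.finrank ℂ (Submodule.span ℂ (Set.range fun T : g => ρ T Ω)) = n)
    (J : g) (hJΩ : ρ J Ω = Ω)
    (W' : Submodule ℂ W) (hΩW' : Ω ∈ W')
    (hW'inv : ∀ (T : g), ∀ w ∈ W', ρ T w ∈ W') :
    Module.finrank ℂ g < Module.finrank ℂ W' := by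
  have hrange :
      range (ρ.toLinearMap.flip Ω) = Submodule.span ℂ (Set.range fun T : g => ρ T Ω) := by
    rw [← Submodule.span_eq (range _), coe_range]
    rfl
  have hinj : Function.Injective (ρ.toLinearMap.flip Ω) :=
    injective_of_finrank_range_eq (by rw [hrange, hLag, hn])
  have hmem : ∀ T, ρ.toLinearMap.flip Ω T ∈ W' := fun T ↦ hW'inv T Ω hΩW'
  have hinj' : Function.Injective ((ρ.toLinearMap.flip Ω).codRestrict W' hmem) :=
    fun _ _ h ↦ hinj (congrArg Subtype.val h)
  refine (finrank_le_finrank_of_injective hinj').lt_of_ne fun hdim ↦ ?_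
  have htrace := ρ.trace_restrict_eq_of_orbit_equiv (c := 1) (by rw [hJΩ, one_smul]) (hW'inv J)
    (linearEquivOfInjective _ hinj' hdim) (fun _ ↦ rfl)
  have hJ : J ∈ LieModule.lowerCentralSeries ℂ g g 1 := by
    rw [LieAlgebra.IsSemisimple.lowerCentralSeries_one_eq_top]
    exact LieSubmodule.mem_top J
  have had : trace ℂ g (LieAlgebra.ad ℂ g J) = 0 :=
    LieModule.trace_toEnd_eq_zero_of_mem_lcs ℂ g g le_rfl hJ
  rw [ρ.trace_restrict_eq_zero_of_mem_lowerCentralSeries hW'inv hJ, had, zero_add, one_mul, hn,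
    eq_comm, Nat.cast_eq_zero] at htrace
  exact hpos.ne' htrace

/-- Let `g` be a complex semisimple Lie algebra of dimension `n > 0` and
`(g, W, Ω)` a homogeneous Airy datum: `W` is a `2n`-dimensional symplectic `g`-module (the action
by infinitesimal symplectomorphisms), `{TΩ : T ∈ g}` is a Lagrangian subspace, and `ρ J Ω = Ω`
with `ad J` diagonalizable with eigenvalues `λ i` summing to `0`.  Then the `g`-submodule `W'`
of `W` generated by `Ω` has dimension strictly greater than `dim g`. -/
theorem stmt14 {g : Type*} [LieRing g] [LieAlgebra ℂ g] [FiniteDimensional ℂ g]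
    [LieAlgebra.IsSemisimple ℂ g]
    {W : Type*} [AddCommGroup W] [Module ℂ W] [FiniteDimensional ℂ W]
    {n : ℕ} (hn : Module.finrank ℂ g = n) (hpos : 0 < n)
    (hW : Module.finrank ℂ W = 2 * n)
    (ω : LinearMap.BilinForm ℂ W)
    (halt : ∀ u : W, ω u u = 0) (hnondeg : ω.Nondegenerate)
    (ρ : g →ₗ⁅ℂ⁆ Module.End ℂ W)
    (hskew : ∀ (T : g) (u v : W), ω (ρ T u) v + ω u (ρ T v) = 0)
    (Ω : W)
    (hiso : ∀ T S : g, ω (ρ T Ω) (ρ S Ω) = 0)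
    (hLag : Module.finrank ℂ (Submodule.span ℂ (Set.range fun T : g => ρ T Ω)) = n)
    (J : g) (hJΩ : ρ J Ω = Ω)
    (lam : Fin n → ℂ) (Tb : Module.Basis (Fin n) ℂ g)
    (hTb : ∀ i, ⁅J, Tb i⁆ = lam i • Tb i) (hsum : ∑ i, lam i = 0)
    (W' : Submodule ℂ W) (hΩW' : Ω ∈ W')
    (hW'inv : ∀ (T : g), ∀ w ∈ W', ρ T w ∈ W')
    (hW'min : ∀ U : Submodule ℂ W, Ω ∈ U → (∀ (T : g), ∀ w ∈ U, ρ T w ∈ U) → W' ≤ U) :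
    Module.finrank ℂ g < Module.finrank ℂ W' :=
  stmt14_general hn hpos ρ Ω hLag J hJΩ W' hΩW' hW'inv
end
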